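/- Let $K \in \mathbb{R}_+^{d\times d}$ be entrywise nonnegative and positive semidefinite. Then the weighted volume of contingency tables, $T(r,c;K) := \sum_{X \in \mathbb{U}(r,c)} \prod_{i,j=1}^d k_{ij}^{x_{ij}}$, is a positive definite kernel on the set $\Sigma_d^N$ of integral histograms $r \in \mathbb{N}^d$ with $r_1 + \cdots + r_d = N$. -/

import Mathlib

/-!
Encode a table of total mass `N` as the word `h : Fin N → [d] × [d]` listing the cells it fills,
one letter per unit of mass; tables are exactly the orbits of words under permutations of the
positions. A weighted Burnside lemma turns the sum over tables into `1 / N!` times a sum over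
permutations `π` of sums over `π`-invariant words. For a fixed `π`, split each word into its row
word and its column word: the sum becomes the quadratic form of the tensor power
`(f, g) ↦ ∏ₜ K (f t) (g t)`, positive semidefinite by the Schur product theorem, evaluated at a
vector supported on `π`-invariant words.
-/

open Finset in
/-- The finite set `𝕌(r,c)` of nonnegative integral `d × d` matrices with row sums `r`
and column sums `c` (every entry of such a matrix is at most the total mass). -/
def UTables (d : ℕ) (r c : Fin d → ℕ) : Finset (Fin d → Fin d → ℕ) :=
  (Fintype.piFinset fun _ : Fin d => Fintype.piFinset fun _ : Fin d =>
      Finset.range ((∑ i, r i) + 1)).filter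
    (fun X => (∀ i, ∑ j, X i j = r i) ∧ (∀ j, ∑ i, X i j = c j))

open Finset
open scoped ComplexOrder

namespace MulAction

variable {G X Y : Type*} [Group G] [Fintype G] [MulAction G X] [DecidableEq X]

theorem card_stabilizer_eq_card_transporter {x₀ x : X} {τ : G} (hτ : τ • x₀ = x) :
    #{g : G | g • x = x} = #{g : G | g • x₀ = x} := by
  refine card_nbij' (· * τ) (· * τ⁻¹) ?_ ?_ ?_ ?_ <;> intro g hg
  · simp_all [mul_smul]
  · simp_all [mul_smul, ← hτ]
  · simp
  · simp

variable [Fintype X] [DecidableEq Y]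

theorem sum_card_stabilizer_orbit_eq_card (κ : X → Y)
    (hκ : ∀ x x', κ x = κ x' ↔ ∃ g : G, g • x = x') (x₀ : X) :
    ∑ x with κ x = κ x₀, #{g : G | g • x = x} = Fintype.card G := by
  calc _ = ∑ x with κ x = κ x₀, #{g : G | g • x₀ = x} := sum_congr rfl fun x hx => by
          obtain ⟨τ, hτ⟩ := (hκ x₀ x).1 (mem_filter.1 hx).2.symm
          exact card_stabilizer_eq_card_transporter hτ
    _ = Fintype.card G := (card_eq_sum_card_fiberwise fun g _ =>
          mem_filter.2 ⟨mem_univ _, ((hκ x₀ _).2 ⟨g, rfl⟩).symm⟩).symm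

theorem sum_sum_fixed_eq_card_smul_sum_image (κ : X → Y)
    (hκ : ∀ x x', κ x = κ x' ↔ ∃ g : G, g • x = x') {R : Type*} [AddCommMonoid R] (F : Y → R) :
    ∑ g : G, ∑ x with g • x = x, F (κ x) = Fintype.card G • ∑ y ∈ univ.image κ, F y := by
  calc _ = ∑ x, #{g : G | g • x = x} • F (κ x) := by
          rw [sum_comm' (t' := univ) (s' := fun x => {g : G | g • x = x}) (by simp)]
          exact sum_congr rfl fun x _ => sum_const _
    _ = ∑ y ∈ univ.image κ, ∑ x with κ x = y, #{g : G | g • x = x} • F y :=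
          (sum_fiberwise_of_maps_to (fun x _ => mem_image_of_mem κ (mem_univ x)) _).symm.trans
            (sum_congr rfl fun y _ => sum_congr rfl fun x hx => by rw [(mem_filter.1 hx).2])
    _ = Fintype.card G • ∑ y ∈ univ.image κ, F y := by
          rw [smul_sum]
          refine sum_congr rfl fun y hy => ?_
          obtain ⟨x₀, -, rfl⟩ := mem_image.1 hy
          rw [← sum_smul, sum_card_stabilizer_orbit_eq_card κ hκ]

end MulAction

namespace Matrix

variable {𝕜 n ι : Type*} [RCLike 𝕜] [Fintype n] [Fintype ι]

theorem PosSemidef.tensorPow {K : Matrix n n 𝕜} (hK : K.PosSemidef) (s : Finset ι) :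
    (of fun f g : ι → n => ∏ t ∈ s, K (f t) (g t)).PosSemidef := by
  classical
  induction s using Finset.induction_on with
  | empty =>
    convert posSemidef_vecMulVec_self_star (1 : (ι → n) → 𝕜) using 1
    ext f g
    simp
  | insert a s ha ih =>
    convert (hK.submatrix fun f : ι → n => f a).hadamard ih using 1
    ext f g
    simp [prod_insert ha]

theorem PosSemidef.sum_sum_mul_mul_nonneg {M : Matrix n n ℝ} (hM : M.PosSemidef) (v : n → ℝ) :
    0 ≤ ∑ i, ∑ j, v i * v j * M i j := by
  refine (hM.dotProduct_mulVec_nonneg v).trans_eq ?_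
  simp only [star_trivial, dotProduct, mulVec, mul_sum]
  exact sum_congr rfl fun i _ => sum_congr rfl fun j _ => by ring

end Matrix

-- Permutations act on words by moving positions: `(π • h) t = h (π⁻¹ t)`.
attribute [local instance] arrowAction

section Words

variable {ι α : Type*} [Fintype ι] [DecidableEq α]

def fiberCard (h : ι → α) (a : α) : ℕ := #{t | h t = a}

theorem fiberCard_eq_card_subtype (h : ι → α) (a : α) :
    fiberCard h a = Fintype.card {t // h t = a} :=
  (Fintype.card_subtype _).symm

theorem fiberCard_comp_equiv (h : ι → α) (e : ι ≃ ι) : fiberCard (h ∘ e) = fiberCard h :=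
  funext fun a => card_equiv e (by simp)

theorem fiberCard_eq_iff_exists_smul_eq (h h' : ι → α) :
    fiberCard h = fiberCard h' ↔ ∃ π : Equiv.Perm ι, π • h = h' := by
  constructor
  · intro hc
    have e (a : α) : {t // h' t = a} ≃ {t // h t = a} :=
      Fintype.equivOfCardEq (by simp only [← fiberCard_eq_card_subtype, hc])
    exact ⟨(Equiv.ofFiberEquiv e)⁻¹, funext (Equiv.ofFiberEquiv_map e)⟩
  · rintro ⟨π, rfl⟩
    exact (fiberCard_comp_equiv h π⁻¹).symm

variable [Fintype α]

theorem sum_fiberCard_comp {β : Type*} [DecidableEq β] (f : α → β) (h : ι → α) (b : β) :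
    ∑ a with f a = b, fiberCard h a = fiberCard (f ∘ h) b := by
  rw [fiberCard, card_eq_sum_card_fiberwise (f := h) (t := {a | f a = b})
    fun t ht => by simpa using ht]
  refine sum_congr rfl fun a ha => ?_
  rw [fiberCard, filter_filter]
  exact congrArg card (filter_congr fun t _ => by simp_all)

theorem sum_fiberCard (h : ι → α) : ∑ a, fiberCard h a = Fintype.card ι :=
  (card_eq_sum_card_fiberwise fun t _ => mem_univ (h t)).symm

theorem exists_fiberCard_eq (y : α → ℕ) (hy : ∑ a, y a = Fintype.card ι) :
    ∃ h : ι → α, fiberCard h = y := by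
  obtain ⟨e⟩ : Nonempty (ι ≃ Σ a, Fin (y a)) := Fintype.card_eq.1 (by simp [hy])
  refine ⟨fun t => (e t).1, funext fun a => ?_⟩
  rw [fiberCard_eq_card_subtype,
    Fintype.card_congr (e.subtypeEquiv (q := fun s => s.1 = a) fun _ => Iff.rfl),
    Fintype.card_congr (Equiv.sigmaSubtype a), Fintype.card_fin]

theorem prod_comp_eq_prod_pow_fiberCard {M : Type*} [CommMonoid M] (h : ι → α) (g : α → M) :
    ∏ t, g (h t) = ∏ a, g a ^ fiberCard h a := by
  rw [prod_comp]
  exact prod_subset (subset_univ _) fun a _ ha => by simp_all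

end Words

section Tables

variable {ι β γ : Type*} [Fintype ι] [DecidableEq β] [DecidableEq γ]

def contingencyTable (h : ι → β × γ) : β → γ → ℕ :=
  Function.curry (fiberCard h)

theorem contingencyTable_eq_iff (h h' : ι → β × γ) :
    contingencyTable h = contingencyTable h' ↔ ∃ π : Equiv.Perm ι, π • h = h' := by
  rw [contingencyTable, contingencyTable, Function.curry_injective.eq_iff,
    fiberCard_eq_iff_exists_smul_eq]

variable [Fintype β] [Fintype γ]

theorem sum_contingencyTable_right (h : ι → β × γ) (i : β) :
    ∑ j, contingencyTable h i j = fiberCard (Prod.fst ∘ h) i := by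
  rw [← sum_fiberCard_comp, sum_filter, Fintype.sum_prod_type, sum_comm]
  simp [contingencyTable]

theorem sum_contingencyTable_left (h : ι → β × γ) (j : γ) :
    ∑ i, contingencyTable h i j = fiberCard (Prod.snd ∘ h) j := by
  rw [← sum_fiberCard_comp, sum_filter, Fintype.sum_prod_type_right, sum_comm]
  simp [contingencyTable]

theorem prod_pow_contingencyTable {M : Type*} [CommMonoid M] (h : ι → β × γ) (K : β → γ → M) :
    ∏ i, ∏ j, K i j ^ contingencyTable h i j = ∏ t, K (h t).1 (h t).2 := by
  rw [prod_comp_eq_prod_pow_fiberCard h fun a => K a.1 a.2, Fintype.prod_prod_type]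
  rfl

theorem mem_image_contingencyTable [DecidableEq ι] (X : β → γ → ℕ) :
    X ∈ univ.image (contingencyTable (ι := ι)) ↔ ∑ i, ∑ j, X i j = Fintype.card ι := by
  rw [← Fintype.sum_prod_type' X]
  constructor
  · intro hX
    obtain ⟨h, -, rfl⟩ := mem_image.1 hX
    exact sum_fiberCard h
  · intro hX
    obtain ⟨h, hh⟩ := exists_fiberCard_eq _ hX
    exact mem_image.2 ⟨h, mem_univ h, by rw [contingencyTable, hh]; rfl⟩

end Tables

theorem sum_fixed_mul_mul_prod_nonneg {ι n : Type*} [Fintype ι] [DecidableEq ι] [Fintype n]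
    [DecidableEq n] {K : Matrix n n ℝ} (hK : K.PosSemidef) (π : Equiv.Perm ι)
    (v : (ι → n) → ℝ) :
    0 ≤ ∑ h : ι → n × n with π • h = h,
      v (Prod.fst ∘ h) * v (Prod.snd ∘ h) * ∏ t, K (h t).1 (h t).2 := by
  set u : (ι → n) → ℝ := fun f => if π • f = f then v f else 0
  have hsplit (h : ι → n × n) :
      π • h = h ↔ π • (Prod.fst ∘ h) = Prod.fst ∘ h ∧ π • (Prod.snd ∘ h) = Prod.snd ∘ h := by
    simp only [funext_iff, Prod.ext_iff]
    exact ⟨fun hh => ⟨fun t => (hh t).1, fun t => (hh t).2⟩, fun hh t => ⟨hh.1 t, hh.2 t⟩⟩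
  calc 0 ≤ ∑ f, ∑ g, u f * u g * ∏ t, K (f t) (g t) :=
        (hK.tensorPow univ).sum_sum_mul_mul_nonneg u
    _ = _ := by
      rw [← Fintype.sum_prod_type',
        ← (Equiv.arrowProdEquivProdArrow ι (fun _ => n) (fun _ => n)).sum_comp, sum_filter]
      refine sum_congr rfl fun h _ => ?_
      change u (Prod.fst ∘ h) * u (Prod.snd ∘ h) * _ = _
      by_cases h₁ : π • (Prod.fst ∘ h) = Prod.fst ∘ h <;>
        by_cases h₂ : π • (Prod.snd ∘ h) = Prod.snd ∘ h <;> simp [u, hsplit h, h₁, h₂]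

theorem sum_sum_mul_mul_sum_filter {P Y Z R : Type*} [Fintype P] [DecidableEq Z]
    [CommSemiring R] (S : Finset Y) (row col : Y → Z) (r : P → Z) (a : P → R) (w : Y → R) :
    ∑ p, ∑ q, a p * a q * ∑ X ∈ S with row X = r p ∧ col X = r q, w X =
      ∑ X ∈ S, (∑ p, if row X = r p then a p else 0) *
        (∑ q, if col X = r q then a q else 0) * w X := by
  simp only [sum_filter, mul_sum, sum_mul, ite_and]
  rw [sum_congr rfl fun p _ => sum_comm, sum_comm]
  refine sum_congr rfl fun X _ => sum_comm.trans (sum_congr rfl fun q _ => ?_)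
  refine sum_congr rfl fun p _ => ?_
  split_ifs <;> simp

theorem UTables_eq_filter_image_contingencyTable {d N : ℕ} (r c : Fin d → ℕ)
    (hr : ∑ i, r i = N) :
    UTables d r c = (univ.image (contingencyTable (ι := Fin N))).filter
      fun X => (fun i => ∑ j, X i j) = r ∧ (fun j => ∑ i, X i j) = c := by
  ext X
  simp only [UTables, mem_filter, Fintype.mem_piFinset, mem_range, mem_image_contingencyTable,
    Fintype.card_fin, funext_iff]
  refine and_congr_left fun ⟨hrow, _⟩ => ⟨fun _ => ?_, fun _ i j => ?_⟩
  · simp only [hrow, hr]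
  · calc X i j ≤ ∑ j, X i j := single_le_sum (fun _ _ => Nat.zero_le _) (mem_univ j)
      _ = r i := hrow i
      _ < ∑ i, r i + 1 :=
        Nat.lt_succ_of_le (single_le_sum (fun _ _ => Nat.zero_le _) (mem_univ i))

theorem stmt10_general (d N : ℕ) (K : Matrix (Fin d) (Fin d) ℝ)
    (hK : K.PosSemidef)
    (n : ℕ) (x : Fin n → {r : Fin d → ℕ // ∑ i, r i = N}) (coef : Fin n → ℝ) :
    0 ≤ ∑ p, ∑ q, coef p * coef q *
      ∑ X ∈ UTables d (x p).1 (x q).1, ∏ i, ∏ j, K i j ^ X i j := by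
  set W : (Fin d → ℕ) → ℝ := fun r => ∑ p, if r = (x p).1 then coef p else 0
  set Φ : (Fin d → Fin d → ℕ) → ℝ := fun X =>
    W (fun i => ∑ j, X i j) * W (fun j => ∑ i, X i j) * ∏ i, ∏ j, K i j ^ X i j
  have hΦ : ∑ p, ∑ q, coef p * coef q *
      ∑ X ∈ UTables d (x p).1 (x q).1, ∏ i, ∏ j, K i j ^ X i j =
      ∑ X ∈ univ.image (contingencyTable (ι := Fin N)), Φ X := by
    simp only [UTables_eq_filter_image_contingencyTable _ _ (x _).2]
    exact sum_sum_mul_mul_sum_filter _ _ _ _ _ _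
  have hΦ_table (h : Fin N → Fin d × Fin d) : Φ (contingencyTable h) =
      W (fiberCard (Prod.fst ∘ h)) * W (fiberCard (Prod.snd ∘ h)) * ∏ t, K (h t).1 (h t).2 := by
    simp only [Φ, sum_contingencyTable_right, sum_contingencyTable_left]
    rw [prod_pow_contingencyTable h K]
  have hfixed : 0 ≤ ∑ π : Equiv.Perm (Fin N),
      ∑ h : Fin N → Fin d × Fin d with π • h = h, Φ (contingencyTable h) :=
    sum_nonneg fun π _ => by
      simp only [hΦ_table]
      exact sum_fixed_mul_mul_prod_nonneg hK π (W ∘ fiberCard)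
  rw [MulAction.sum_sum_fixed_eq_card_smul_sum_image _ contingencyTable_eq_iff, nsmul_eq_mul]
    at hfixed
  rw [hΦ]
  exact nonneg_of_mul_nonneg_right hfixed (by positivity)

/-- if `K ∈ ℝ₊^{d×d}` is entrywise nonnegative and positive semidefinite,
then the weighted volume of contingency tables
`T(r,c;K) = ∑_{X ∈ 𝕌(r,c)} ∏_{ij} k_{ij}^{x_{ij}}` is a positive definite kernel on the
set `Σ_d^N` of integral histograms of total mass `N`. -/
theorem stmt10 (d N : ℕ) (K : Matrix (Fin d) (Fin d) ℝ)
    (hK0 : ∀ i j, 0 ≤ K i j) (hK : K.PosSemidef)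
    (n : ℕ) (x : Fin n → {r : Fin d → ℕ // ∑ i, r i = N}) (coef : Fin n → ℝ) :
    0 ≤ ∑ p, ∑ q, coef p * coef q *
      ∑ X ∈ UTables d (x p).1 (x q).1, ∏ i, ∏ j, K i j ^ X i j :=
  stmt10_general d N K hK n x coef
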